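/- Pell's equation x² − a·y² = 1, where a is a positive integer that is not a perfect square, has infinitely many integer solutions (x, y). -/
import Mathlib

/-- Pell's equation `x² − a·y² = 1`, with `a` a positive integer that is not a
perfect square, has infinitely many integer solutions. -/
theorem pell_infinitely_many_solutions
    (a : ℤ) (ha : 0 < a) (hns : ¬ ∃ k : ℤ, k ^ 2 = a) :
    {p : ℤ × ℤ | p.1 ^ 2 - a * p.2 ^ 2 = 1}.Infinite := by
  have hsq : ¬ IsSquare a := by
    rintro ⟨k, rfl⟩
    exact hns ⟨k, (sq k).symm ▸ rfl⟩
  obtain ⟨b, hb⟩ := Pell.IsFundamental.exists_of_not_isSquare ha hsq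
  apply Set.infinite_of_injective_forall_mem
    (f := fun n : ℤ => ((b ^ n).x, (b ^ n).y))
  · intro m n h
    exact hb.y_strictMono.injective (congrArg Prod.snd h)
  · intro n
    simpa using (b ^ n).prop
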